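/- Let φ = (√5 − 1)/2. For all real p, q with 1/2 ≤ q < p < φ and every positive integer n, one has s_n(p) < s_n(q) + 17·(p − q). -/
import Mathlib


/-- `v p n` is the optimal expected number of heads in the coin game with `n` coins,
each landing heads with probability `p`. -/
noncomputable def v (p : ℝ) : ℕ → ℝ
  | 0 => 0
  | n + 1 =>
      ((n : ℝ) + 1) * p ^ (n + 1) + v p n * (1 - p) ^ (n + 1) +
        ∑ j ∈ (Finset.Icc 1 n).attach,
          (((n + 1).choose j.1 : ℕ) : ℝ) * p ^ (j.1 : ℕ) * (1 - p) ^ (n + 1 - j.1) *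
            ((Finset.Icc 1 j.1).attach.sup'
              (Finset.attach_nonempty_iff.mpr
                (Finset.nonempty_Icc.mpr (Finset.mem_Icc.mp j.2).1))
              (fun i => v p (n + 1 - i.1) + (i.1 : ℝ)))
decreasing_by
  · omega
  · have h := (Finset.mem_Icc.mp i.2).1
    omega

/-- `s p n = v p n - n + 1 - p`. -/
noncomputable def s (p : ℝ) (n : ℕ) : ℝ := v p n - n + 1 - p

lemma v_zero (p : ℝ) : v p 0 = 0 := by rw [v]

lemma v_one (p : ℝ) : v p 1 = p := by
  rw [v]
  rw [show (Finset.Icc 1 0).attach = (∅ : Finset {x // x ∈ Finset.Icc 1 0}) from by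
    simp [Finset.attach_eq_empty_iff]]
  simp [v_zero]

lemma v_eq_s (p : ℝ) (n : ℕ) : v p n = n - 1 + p + s p n := by
  unfold s; ring

lemma s_one (p : ℝ) : s p 1 = 0 := by simp [s, v_one]

lemma sup'_eval (r : ℝ) (n j : ℕ) (h1 : 1 ≤ j) (hjn : j ≤ n)
    (hmono : ∀ m, 2 ≤ m → m ≤ n → s r m ≤ s r n)
    (H : (Finset.Icc 1 j).attach.Nonempty) :
    (Finset.Icc 1 j).attach.sup' H (fun i => v r (n + 1 - i.1) + (i.1 : ℝ))
      = v r n + 1 + (if j = n then max (-(s r n)) 0 else 0) := by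
  have hmax : (0:ℝ) ≤ max (-(s r n)) 0 := le_max_right _ _
  apply le_antisymm
  · apply Finset.sup'_le
    intro i _
    obtain ⟨hi1, hij⟩ := Finset.mem_Icc.mp i.2
    set m := n + 1 - i.1 with hm
    have hm1 : 1 ≤ m := by omega
    have hmn : m ≤ n := by omega
    have hsum : m + i.1 = n + 1 := by omega
    have hcast : (m : ℝ) + (i.1 : ℝ) = (n : ℝ) + 1 := by
      exact_mod_cast congrArg (Nat.cast (R := ℝ)) hsum
    have hv : v r m + (i.1:ℝ) = (n:ℝ) + r + s r m := by
      rw [v_eq_s]; push_cast; linarith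
    rw [show v r (n+1-i.1) + (i.1:ℝ) = v r m + (i.1:ℝ) from rfl, hv]
    by_cases hin : i.1 = n
    · have hjn' : j = n := by omega
      have hm' : m = 1 := by omega
      rw [hm', s_one, hjn', if_pos rfl]
      have : -(s r n) ≤ max (-(s r n)) 0 := le_max_left _ _
      rw [v_eq_s]
      push_cast
      linarith
    · rcases Nat.lt_or_ge m 2 with hm2 | hm2
      · -- m = 1, i.1 = n impossible here
        omega
      · have := hmono m hm2 hmn
        have hvn : v r n + 1 = (n:ℝ) + r + s r n := by rw [v_eq_s]; push_cast; ring
        split_ifs <;> [linarith; linarith]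
  · by_cases hjn' : j = n
    · rw [if_pos hjn']
      rcases le_or_gt 0 (s r n) with hs | hs
      · have h1mem : (1:ℕ) ∈ Finset.Icc 1 j := Finset.mem_Icc.mpr ⟨le_refl _, h1⟩
        have := Finset.le_sup' (fun i : {x // x ∈ Finset.Icc 1 j} => v r (n + 1 - i.1) + (i.1 : ℝ))
          (Finset.mem_attach _ ⟨1, h1mem⟩)
        simp only at this
        have heval : v r (n + 1 - 1) + ((1:ℕ):ℝ) = v r n + 1 := by norm_num
        rw [max_eq_right (by linarith), add_zero]
        calc v r n + 1 = v r (n+1-1) + ((1:ℕ):ℝ) := by norm_num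
          _ ≤ _ := this
      · have hnmem : (n:ℕ) ∈ Finset.Icc 1 j := Finset.mem_Icc.mpr ⟨by omega, by omega⟩
        have := Finset.le_sup' (fun i : {x // x ∈ Finset.Icc 1 j} => v r (n + 1 - i.1) + (i.1 : ℝ))
          (Finset.mem_attach _ ⟨n, hnmem⟩)
        simp only at this
        have heval : v r (n + 1 - n) + ((n:ℕ):ℝ) = r + n := by
          rw [show n + 1 - n = 1 by omega, v_one]
        rw [max_eq_left (by linarith)]
        have hvn : v r n = (n:ℝ) - 1 + r + s r n := v_eq_s r n
        calc v r n + 1 + -(s r n) = r + (n:ℝ) := by rw [hvn]; ring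
          _ = v r (n+1-n) + ((n:ℕ):ℝ) := by rw [heval]
          _ ≤ _ := this
    · rw [if_neg hjn', add_zero]
      have h1mem : (1:ℕ) ∈ Finset.Icc 1 j := Finset.mem_Icc.mpr ⟨le_refl _, h1⟩
      have := Finset.le_sup' (fun i : {x // x ∈ Finset.Icc 1 j} => v r (n + 1 - i.1) + (i.1 : ℝ))
        (Finset.mem_attach _ ⟨1, h1mem⟩)
      simp only at this
      calc v r n + 1 = v r (n+1-1) + ((1:ℕ):ℝ) := by norm_num
        _ ≤ _ := this

lemma sum_w (r : ℝ) (n : ℕ) :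
    ∑ j ∈ Finset.Icc 1 n, (((n + 1).choose j : ℕ) : ℝ) * r ^ j * (1 - r) ^ (n + 1 - j)
      = 1 - (1 - r) ^ (n + 1) - r ^ (n + 1) := by
  have h := add_pow r (1 - r) (n + 1)
  rw [show r + (1 - r) = 1 by ring, one_pow] at h
  -- h : 1 = ∑ k in range (n+2), r^k * (1-r)^(n+1-k) * C(n+1,k)
  rw [Finset.sum_range_succ] at h
  -- peel k = n+1
  rw [Finset.sum_range_succ'] at h
  -- peel k = 0
  simp only [pow_zero, Nat.choose_zero_right, Nat.choose_self, Nat.sub_self, Nat.cast_one,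
    one_mul, mul_one, Nat.sub_zero] at h
  have hIcc : ∑ j ∈ Finset.Icc 1 n, (((n + 1).choose j : ℕ) : ℝ) * r ^ j * (1 - r) ^ (n + 1 - j)
      = ∑ i ∈ Finset.range n, (((n + 1).choose (1 + i) : ℕ) : ℝ) * r ^ (1 + i) * (1 - r) ^ (n + 1 - (1 + i)) := by
    rw [← Finset.Ico_add_one_right_eq_Icc, Finset.sum_Ico_eq_sum_range]
    simp
  rw [hIcc]
  have heq : ∀ i ∈ Finset.range n,
      (((n + 1).choose (1 + i) : ℕ) : ℝ) * r ^ (1 + i) * (1 - r) ^ (n + 1 - (1 + i))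
      = r ^ (i + 1) * (1 - r) ^ (n + 1 - (i + 1)) * ((n + 1).choose (i + 1) : ℝ) := by
    intro i hi
    rw [show 1 + i = i + 1 by ring]
    ring
  rw [Finset.sum_congr rfl heq]
  linarith [h]

lemma v_rec (r : ℝ) (n : ℕ) (hn : 1 ≤ n)
    (hmono : ∀ m, 2 ≤ m → m ≤ n → s r m ≤ s r n) :
    v r (n+1) = ((n:ℝ)+1)*r^(n+1) + v r n * (1-r)^(n+1)
      + (1 - (1-r)^(n+1) - r^(n+1)) * (v r n + 1)
      + ((n:ℝ)+1)*r^n*(1-r) * max (-(s r n)) 0 := by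
  rw [v]
  have hcongr : ∀ j ∈ (Finset.Icc 1 n).attach,
      (((n + 1).choose j.1 : ℕ) : ℝ) * r ^ (j.1 : ℕ) * (1 - r) ^ (n + 1 - j.1) *
        ((Finset.Icc 1 j.1).attach.sup'
          (Finset.attach_nonempty_iff.mpr
            (Finset.nonempty_Icc.mpr (Finset.mem_Icc.mp j.2).1))
          (fun i => v r (n + 1 - i.1) + (i.1 : ℝ)))
      = (fun k => (((n + 1).choose k : ℕ) : ℝ) * r ^ k * (1 - r) ^ (n + 1 - k) *
          (v r n + 1 + (if k = n then max (-(s r n)) 0 else 0))) j.1 := by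
    intro j _
    obtain ⟨hj1, hjn⟩ := Finset.mem_Icc.mp j.2
    rw [sup'_eval r n j.1 hj1 hjn hmono]
  rw [Finset.sum_congr rfl hcongr]
  rw [Finset.sum_attach (Finset.Icc 1 n)
    (fun k => (((n + 1).choose k : ℕ) : ℝ) * r ^ k * (1 - r) ^ (n + 1 - k) *
          (v r n + 1 + (if k = n then max (-(s r n)) 0 else 0)))]
  have hsplit : ∑ k ∈ Finset.Icc 1 n, (((n + 1).choose k : ℕ) : ℝ) * r ^ k * (1 - r) ^ (n + 1 - k) *
          (v r n + 1 + (if k = n then max (-(s r n)) 0 else 0))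
      = (∑ k ∈ Finset.Icc 1 n, (((n + 1).choose k : ℕ) : ℝ) * r ^ k * (1 - r) ^ (n + 1 - k)) * (v r n + 1)
        + ∑ k ∈ Finset.Icc 1 n, (if k = n then (((n + 1).choose k : ℕ) : ℝ) * r ^ k * (1 - r) ^ (n + 1 - k) * max (-(s r n)) 0 else 0) := by
    rw [Finset.sum_mul, ← Finset.sum_add_distrib]
    apply Finset.sum_congr rfl
    intro k _
    split_ifs <;> ring
  rw [hsplit, Finset.sum_ite_eq' (Finset.Icc 1 n)]
  rw [if_pos (Finset.mem_Icc.mpr ⟨hn, le_refl n⟩)]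
  rw [sum_w]
  have hch : (((n + 1).choose n : ℕ) : ℝ) = (n:ℝ) + 1 := by
    rw [Nat.choose_succ_self_right]; push_cast; ring
  rw [hch, show n + 1 - n = 1 by omega, pow_one]
  ring


lemma s_rec (r : ℝ) (n : ℕ) (hn : 1 ≤ n)
    (hmono : ∀ m, 2 ≤ m → m ≤ n → s r m ≤ s r n) :
    s r (n+1) = s r n + r^(n+1)*(1 - r - s r n) - (1-r)^(n+1)
      + ((n:ℝ)+1)*r^n*(1-r) * max (-(s r n)) 0 := by
  have hv := v_rec r n hn hmono
  have hvn : v r n = (n:ℝ) - 1 + r + s r n := v_eq_s r n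
  have hs : s r (n+1) = v r (n+1) - ((n:ℝ)+1) + 1 - r := by
    unfold s; push_cast; ring
  rw [hs, hv, hvn]; ring

set_option maxHeartbeats 2000000 in
/-- One step of the invariant propagation, in pure real form. -/
lemma step_lemma (r X Y a b G G' : ℝ)
    (hr1 : 1/2 ≤ r) (hrlt1 : r < 1)
    (hX : 0 < X) (hY : 0 < Y) (hYX : Y ≤ X) (hrX1 : r*X ≤ 1)
    (hXG : X*G ≤ 1) (hG1 : 1 ≤ G) (hGG' : G' = G + (1-r))
    (hrec : b = a + r*X*(1-r-a) - (1-r)*Y + (X*G - r*X) * max (-a) 0)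
    (hU : 0 ≤ a → r*X*a ≤ (1-r)*(r*X-Y))
    (hN : a < 0 → X*G*a ≤ (1-r)*(r*X-Y)) :
    (a ≤ b) ∧
    (0 ≤ b → r^2*X*b ≤ (1-r)*(r^2*X - (1-r)*Y)) ∧
    (b < 0 → r*X*G'*b ≤ (1-r)*(r^2*X - (1-r)*Y)) := by
  have hr0 : (0:ℝ) < r := by linarith
  have h1r : (0:ℝ) < 1 - r := by linarith
  have hrG : r ≤ G := by linarith
  have hXGrX : 0 ≤ X*G - r*X := by nlinarith
  have hab : a ≤ b := by
    rcases le_or_gt 0 a with hpos | hneg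
    · have hmax : max (-a) 0 = 0 := max_eq_right (by linarith)
      rw [hrec, hmax]
      have := hU hpos
      nlinarith
    · have hmax : max (-a) 0 = -a := max_eq_left (by linarith)
      rw [hrec, hmax]
      have := hN hneg
      nlinarith
  refine ⟨hab, ?_, ?_⟩
  · intro hb
    rcases le_or_gt 0 a with hpos | hneg
    · have hmax : max (-a) 0 = 0 := max_eq_right (by linarith)
      have hbeq : b = (1 - r*X)*a + ((1-r)*(r*X-Y)) := by rw [hrec, hmax]; ring
      have hUa := hU hpos
      rw [hbeq]
      nlinarith [mul_le_mul_of_nonneg_left hUa (by nlinarith : (0:ℝ) ≤ r*(1-r*X)), mul_pos hX hY,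
        mul_nonneg (mul_nonneg hY.le (by linarith : (0:ℝ) ≤ 2*r-1)) (by linarith : (0:ℝ) ≤ 1-r)]
    · have hmax : max (-a) 0 = -a := max_eq_left (by linarith)
      have hbeq : b = (1 - X*G)*a + ((1-r)*(r*X-Y)) := by rw [hrec, hmax]; ring
      have hbR : b ≤ (1-r)*(r*X-Y) := by
        have h1 : (1 - X*G)*a ≤ 0 := mul_nonpos_of_nonneg_of_nonpos (by linarith) hneg.le
        linarith [hbeq ▸ le_refl b]
      have hYrX : Y ≤ r*X := by nlinarith [le_trans hb hbR]
      have key : r^2*X*((1-r)*(r*X-Y)) ≤ (1-r)*(r^2*X - (1-r)*Y) := by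
        rcases le_total (1-r) (r^2*X) with hc | hc
        · nlinarith [mul_nonneg (mul_nonneg hX.le (by linarith : (0:ℝ) ≤ 1-r)) (by nlinarith : (0:ℝ) ≤ 1 - r*X),
            mul_nonneg (mul_nonneg hY.le (by linarith : (0:ℝ) ≤ 1-r)) (by linarith : (0:ℝ) ≤ r^2*X - (1-r))]
        · nlinarith [mul_nonneg (mul_nonneg (sub_nonneg.2 hYrX) (by linarith : (0:ℝ) ≤ 1-r)) (by linarith : (0:ℝ) ≤ 1 - r - r^2*X),
            mul_nonneg (mul_nonneg (mul_nonneg hX.le hr0.le) (by linarith : (0:ℝ) ≤ 1-r)) (by linarith : (0:ℝ) ≤ 2*r-1)]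
      calc r^2*X*b ≤ r^2*X*((1-r)*(r*X-Y)) := by
            apply mul_le_mul_of_nonneg_left hbR (by positivity)
        _ ≤ (1-r)*(r^2*X - (1-r)*Y) := key
  · intro hb
    rcases le_or_gt 0 a with hpos | hneg
    · linarith
    · have hmax : max (-a) 0 = -a := max_eq_left (by linarith)
      have hbeq : b = (1 - X*G)*a + ((1-r)*(r*X-Y)) := by rw [hrec, hmax]; ring
      have hG'1 : (1:ℝ) ≤ G' := by rw [hGG']; linarith
      rcases le_or_gt Y (r*X) with hYrX | hrXY
      · have hG'0 : (0:ℝ) < G' := by linarith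
        have hR'pos : 0 ≤ (1-r)*(r^2*X - (1-r)*Y) := by
          apply mul_nonneg (by linarith)
          nlinarith [mul_le_mul_of_nonneg_left hYrX hr0.le,
            mul_nonneg (by linarith : (0:ℝ) ≤ 2*r-1) hY.le]
        have hfac : 0 < r*X*G' := mul_pos (mul_pos hr0 hX) hG'0
        have : r*X*G'*b ≤ 0 := mul_nonpos_of_nonneg_of_nonpos hfac.le hb.le
        linarith
      · have hNa := hN hneg
        have hXgb : X*G*b ≤ (1-r)*(r*X-Y) := by
          have h1 : 0 ≤ 1 - X*G := by linarith
          have h2 : X*G*((1 - X*G)*a) ≤ (1 - X*G)*((1-r)*(r*X-Y)) := by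
            calc X*G*((1 - X*G)*a) = (1 - X*G)*(X*G*a) := by ring
              _ ≤ (1 - X*G)*((1-r)*(r*X-Y)) := mul_le_mul_of_nonneg_left hNa h1
          have h3 : X*G*b = X*G*((1-X*G)*a) + X*G*((1-r)*(r*X-Y)) := by rw [hbeq]; ring
          nlinarith
        have hkey : G*((1-r)*(r^2*X - (1-r)*Y)) - r*G'*((1-r)*(r*X-Y))
            = (1-r)*(G*Y*(2*r-1) + r*(1-r)*(Y-r*X)) := by
          rw [hGG']; ring
        have hpos2 : 0 ≤ (1-r)*(G*Y*(2*r-1) + r*(1-r)*(Y-r*X)) := by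
          apply mul_nonneg (by linarith)
          have t1 : 0 ≤ G*Y*(2*r-1) :=
            mul_nonneg (mul_nonneg (by linarith) hY.le) (by linarith)
          have t2 : 0 ≤ r*(1-r)*(Y-r*X) :=
            mul_nonneg (mul_nonneg hr0.le (by linarith)) (by linarith)
          linarith
        have hrg' : 0 < r*G' := by positivity
        have hc1 : (r*G')*(X*G*b) ≤ (r*G')*((1-r)*(r*X-Y)) :=
          mul_le_mul_of_nonneg_left hXgb hrg'.le
        have hgpos : (0:ℝ) < G := by linarith
        have final : G*(r*X*G'*b) ≤ G*((1-r)*(r^2*X - (1-r)*Y)) := by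
          have hid : G*(r*X*G'*b) = (r*G')*(X*G*b) := by ring
          rw [hid]
          calc (r*G')*(X*G*b) ≤ (r*G')*((1-r)*(r*X-Y)) := hc1
            _ ≤ G*((1-r)*(r^2*X - (1-r)*Y)) := by linarith
        exact le_of_mul_le_mul_left final hgpos

lemma LX1 (r : ℝ) (hr0 : 0 ≤ r) : ∀ n : ℕ, r^n * ((n:ℝ)+1-(n:ℝ)*r) ≤ 1 := by
  intro n
  induction n with
  | zero => simp
  | succ k ih =>
    have hpos : (0:ℝ) ≤ r^k := pow_nonneg hr0 k
    have key : r * (((k:ℝ)+1)+1-((k:ℝ)+1)*r) ≤ (k:ℝ)+1-(k:ℝ)*r := by nlinarith [sq_nonneg (1-r)]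
    calc r^(k+1) * (((k+1:ℕ):ℝ)+1-((k+1:ℕ):ℝ)*r) = r^k * (r * (((k:ℝ)+1)+1-((k:ℝ)+1)*r)) := by
          push_cast; ring
      _ ≤ r^k * ((k:ℝ)+1-(k:ℝ)*r) := by
          apply mul_le_mul_of_nonneg_left key hpos
      _ ≤ 1 := ih

lemma phi_facts (r : ℝ) (hr1 : 1/2 ≤ r) (hr2 : r < (Real.sqrt 5 - 1)/2) :
    r^2 + r - 1 < 0 ∧ r ≤ 31/50 := by
  have h5 : (Real.sqrt 5)^2 = 5 := Real.sq_sqrt (by norm_num)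
  have h5n : 0 ≤ Real.sqrt 5 := Real.sqrt_nonneg 5
  have h : 2*r+1 < Real.sqrt 5 := by linarith
  have h2 : (2*r+1)^2 < (Real.sqrt 5)^2 := by
    apply pow_lt_pow_left₀ h (by linarith) (by norm_num)
  have hphi : r^2 + r - 1 < 0 := by nlinarith
  exact ⟨hphi, by nlinarith⟩

lemma s_two (r : ℝ) : s r 2 = 2*r - r^3 - 1 := by
  have h := s_rec r 1 (le_refl 1) (by intro m hm2 hm1; omega)
  rw [s_one] at h
  norm_num at h
  rw [h]; ring

theorem bundle (r : ℝ) (hr1 : 1/2 ≤ r) (hr2 : r < (Real.sqrt 5 - 1)/2) :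
    ∀ n, 2 ≤ n →
      (0 ≤ s r n → r^(n+1) * s r n ≤ (1-r)*(r^(n+1) - (1-r)^n)) ∧
      (s r n < 0 → r^n*((n:ℝ)+1-(n:ℝ)*r) * s r n ≤ (1-r)*(r^(n+1) - (1-r)^n)) ∧
      (∀ m, 2 ≤ m → m ≤ n → s r m ≤ s r n) := by
  obtain ⟨hphi, hrc⟩ := phi_facts r hr1 hr2
  have hr0 : (0:ℝ) < r := by linarith
  have hrlt1 : r < 1 := by nlinarith
  have h1r : (0:ℝ) < 1 - r := by linarith
  have h1r2 : 1 - r ≤ r := by linarith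
  intro n hn
  induction n, hn using Nat.le_induction with
  | base =>
    have hs2 : s r 2 = 2*r - r^3 - 1 := s_two r
    have hs2neg : s r 2 < 0 := by rw [hs2]; nlinarith
    refine ⟨fun h => absurd h (by linarith), fun _ => ?_, fun m hm2 hmn => ?_⟩
    · rw [hs2]
      push_cast
      have key : (1-r)*(r^(2+1) - (1-r)^2) - r^2*((2:ℝ)+1-(2:ℝ)*r)*(2*r-r^3-1)
          = (1-r)*((2*r-1)*(r^2-1)^2) := by ring
      have pos : 0 ≤ (1-r)*((2*r-1)*(r^2-1)^2) :=
        mul_nonneg (by linarith) (mul_nonneg (by linarith) (sq_nonneg _))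
      linarith
    · have : m = 2 := by omega
      rw [this]
  | succ n hn ih =>
    obtain ⟨hU, hN, hmono⟩ := ih
    have hrec := s_rec r n (by omega) hmono
    have hX : 0 < r^n := pow_pos hr0 n
    have hY : 0 < (1-r)^n := pow_pos h1r n
    have hYX : (1-r)^n ≤ r^n := pow_le_pow_left₀ (by linarith) h1r2 n
    have hX1 : r^n ≤ 1 := pow_le_one₀ hr0.le hrlt1.le
    have hrX1 : r*r^n ≤ 1 := by nlinarith
    have hXg : r^n*((n:ℝ)+1-(n:ℝ)*r) ≤ 1 := LX1 r hr0.le n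
    have hg1 : (1:ℝ) ≤ (n:ℝ)+1-(n:ℝ)*r := by
      have : (0:ℝ) ≤ (n:ℝ)*(1-r) := by positivity
      nlinarith
    have hrec' : s r (n+1) = s r n + r*r^n*(1 - r - s r n) - (1-r)*(1-r)^n
        + (r^n*((n:ℝ)+1-(n:ℝ)*r) - r*r^n) * max (-(s r n)) 0 := by
      rw [hrec]
      have e1 : r^(n+1) = r*r^n := by ring
      have e2 : (1-r)^(n+1) = (1-r)*(1-r)^n := by ring
      have e3 : ((n:ℝ)+1)*r^n*(1-r) = r^n*((n:ℝ)+1-(n:ℝ)*r) - r*r^n := by ring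
      rw [e1, e2, e3]
    have hU' : 0 ≤ s r n → r*r^n*(s r n) ≤ (1-r)*(r*r^n-(1-r)^n) := by
      intro h; have := hU h
      have e1 : r^(n+1) = r*r^n := by ring
      rw [e1] at this; linarith
    have hN' : s r n < 0 → r^n*((n:ℝ)+1-(n:ℝ)*r)*(s r n) ≤ (1-r)*(r*r^n-(1-r)^n) := by
      intro h; have := hN h
      have e1 : r^(n+1) = r*r^n := by ring
      rw [e1] at this; linarith
    obtain ⟨hab, hUr, hNr⟩ := step_lemma r (r^n) ((1-r)^n) (s r n) (s r (n+1))
      ((n:ℝ)+1-(n:ℝ)*r) (((n:ℝ)+1)+1-((n:ℝ)+1)*r)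
      hr1 hrlt1 hX hY hYX hrX1 hXg hg1 (by ring) hrec' hU' hN'
    refine ⟨?_, ?_, ?_⟩
    · intro hb
      have := hUr hb
      have e1 : r^(n+1+1) = r^2*r^n := by ring
      have e2 : (1-r)^(n+1) = (1-r)*(1-r)^n := by ring
      rw [e1, e2]; linarith
    · intro hb
      have := hNr hb
      have e1 : r^(n+1+1) = r^2*r^n := by ring
      have e2 : (1-r)^(n+1) = (1-r)*(1-r)^n := by ring
      have e3 : r^(n+1)*(((n+1:ℕ):ℝ)+1-((n+1:ℕ):ℝ)*r) = r*r^n*(((n:ℝ)+1)+1-((n:ℝ)+1)*r) := by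
        push_cast; ring
      rw [e1, e2, e3]; linarith
    · intro m hm2 hmn1
      rcases Nat.lt_or_ge m (n+1) with hlt | hge
      · exact le_trans (hmono m hm2 (by omega)) hab
      · have : m = n+1 := by omega
        rw [this]

lemma pow_diff_le (p q : ℝ) (h0 : 0 ≤ q) (hqp : q ≤ p) :
    ∀ k : ℕ, p^(k+1) - q^(k+1) ≤ ((k:ℝ)+1)*p^k*(p-q) := by
  intro k
  induction k with
  | zero => simp
  | succ m ih =>
    have hp0 : 0 ≤ p := le_trans h0 hqp
    have hq : q^(m+1) ≤ p^(m+1) := pow_le_pow_left₀ h0 hqp (m+1)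
    have key : p^(m+1+1) - q^(m+1+1) = p*(p^(m+1) - q^(m+1)) + (p-q)*q^(m+1) := by ring
    have h1 : p*(p^(m+1) - q^(m+1)) ≤ p*(((m:ℝ)+1)*p^m*(p-q)) :=
      mul_le_mul_of_nonneg_left ih hp0
    have h2 : (p-q)*q^(m+1) ≤ (p-q)*p^(m+1) :=
      mul_le_mul_of_nonneg_left hq (by linarith)
    calc p^(m+1+1) - q^(m+1+1) = p*(p^(m+1) - q^(m+1)) + (p-q)*q^(m+1) := key
      _ ≤ p*(((m:ℝ)+1)*p^m*(p-q)) + (p-q)*p^(m+1) := by linarith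
      _ = (((m+1:ℕ):ℝ)+1)*p^(m+1)*(p-q) := by push_cast; ring

lemma pow_diff_nonneg (p q : ℝ) (h0 : 0 ≤ q) (hqp : q ≤ p) (k : ℕ) :
    0 ≤ p^k - q^k := sub_nonneg.2 (pow_le_pow_left₀ h0 hqp k)

lemma F_lip_ordered (A B a b : ℝ) (hA : 0 ≤ A) (hB : 0 ≤ B) (hAB : A + B ≤ 1)
    (hba : b ≤ a) :
    |(1-A)*(a-b) + B*(max (-a) 0 - max (-b) 0)| ≤ a - b := by
  have hM1 : max (-a) 0 - max (-b) 0 ≤ 0 := by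
    have : max (-a) 0 ≤ max (-b) 0 := max_le_max (by linarith) le_rfl
    linarith
  have hM2 : -(a-b) ≤ max (-a) 0 - max (-b) 0 := by
    have : max (-b) 0 ≤ max (-a) 0 + (a-b) := by
      apply max_le
      · have : -b ≤ -a + (a-b) := by linarith
        calc -b ≤ -a + (a-b) := this
          _ ≤ max (-a) 0 + (a-b) := by linarith [le_max_left (-a) (0:ℝ)]
      · calc (0:ℝ) ≤ 0 + (a-b) := by linarith
          _ ≤ max (-a) 0 + (a-b) := by linarith [le_max_right (-a) (0:ℝ)]
    linarith
  rw [abs_le]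
  constructor
  · nlinarith [mul_le_mul_of_nonneg_left hM2 hB, mul_nonneg (by linarith : (0:ℝ) ≤ 1-A-B) (by linarith : (0:ℝ) ≤ a-b)]
  · nlinarith [mul_nonpos_of_nonneg_of_nonpos hB hM1, mul_nonneg hA (by linarith : (0:ℝ) ≤ a-b)]

lemma F_lip (A B a b : ℝ) (hA : 0 ≤ A) (hB : 0 ≤ B) (hAB : A + B ≤ 1) :
    |(1-A)*(a-b) + B*(max (-a) 0 - max (-b) 0)| ≤ |a - b| := by
  rcases le_total b a with h | h
  · rw [abs_of_nonneg (by linarith : (0:ℝ) ≤ a - b)]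
    exact F_lip_ordered A B a b hA hB hAB h
  · rw [abs_of_nonpos (by linarith : a - b ≤ 0)]
    have := F_lip_ordered A B b a hA hB hAB h
    have heq : |(1-A)*(a-b) + B*(max (-a) 0 - max (-b) 0)|
        = |(1-A)*(b-a) + B*(max (-b) 0 - max (-a) 0)| := by
      rw [← abs_neg]; congr 1; ring
    rw [heq]; linarith [this]


lemma phi_lt (r : ℝ) (hr1 : 1/2 ≤ r) (hr2 : r < (Real.sqrt 5 - 1)/2) : r ≤ 31/50 :=
  (phi_facts r hr1 hr2).2

lemma s_mono (r : ℝ) (hr1 : 1/2 ≤ r) (hr2 : r < (Real.sqrt 5 - 1)/2) (n : ℕ) (hn : 2 ≤ n) :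
    ∀ m, 2 ≤ m → m ≤ n → s r m ≤ s r n :=
  (bundle r hr1 hr2 n hn).2.2

lemma s_lb (r : ℝ) (hr1 : 1/2 ≤ r) (hr2 : r < (Real.sqrt 5 - 1)/2) (n : ℕ) (hn : 2 ≤ n) :
    -(1/8) ≤ s r n := by
  have hmono := (bundle r hr1 hr2 n hn).2.2 2 (le_refl 2) hn
  have hs2 : s r 2 = 2*r - r^3 - 1 := s_two r
  have hrc : r ≤ 31/50 := (phi_facts r hr1 hr2).2
  have key : -(1/8) ≤ 2*r - r^3 - 1 := by
    nlinarith [mul_nonneg (by linarith : (0:ℝ) ≤ r - 1/2)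
      (by nlinarith : (0:ℝ) ≤ 7/4 - r/2 - r^2)]
  linarith [hs2 ▸ hmono]

lemma s_ub (r : ℝ) (hr1 : 1/2 ≤ r) (hr2 : r < (Real.sqrt 5 - 1)/2) (n : ℕ) (hn : 2 ≤ n) :
    s r n ≤ 1/2 := by
  rcases le_or_gt 0 (s r n) with hpos | hneg
  · have hU := (bundle r hr1 hr2 n hn).1 hpos
    have hrc : r ≤ 31/50 := (phi_facts r hr1 hr2).2
    have hr0 : (0:ℝ) < r := by linarith
    have h1r : (0:ℝ) < 1 - r := by linarith
    have hXpos : (0:ℝ) < r^(n+1) := pow_pos hr0 (n+1)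
    have hYpos : (0:ℝ) < (1-r)^n := pow_pos h1r n
    have h2 : r^(n+1) * s r n ≤ r^(n+1) * (1-r) := by
      have : (1-r)*(r^(n+1) - (1-r)^n) ≤ (1-r)*r^(n+1) := by nlinarith
      linarith
    have := le_of_mul_le_mul_left (by linarith [h2] : r^(n+1) * s r n ≤ r^(n+1) * (1-r)) hXpos
    linarith
  · linarith

noncomputable def hh (m : ℕ) : ℝ :=
  (((m:ℝ))^2/3 + 4*(m:ℝ) + 10)*(31/50:ℝ)^(m-1) + (2*(m:ℝ)+4)*(1/2:ℝ)^m

lemma hh_nonneg (m : ℕ) : 0 ≤ hh m := by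
  unfold hh; positivity

lemma pot_step (n : ℕ) (hn : 2 ≤ n) :
    (3/2)*((n:ℝ)+1)*(31/50:ℝ)^n + ((n:ℝ)+1)*(1/2:ℝ)^n
      + (1/8)*(n:ℝ)*((n:ℝ)+1)*(31/50:ℝ)^(n-1) ≤ hh n - hh (n+1) := by
  have hN : (2:ℝ) ≤ (n:ℝ) := by exact_mod_cast hn
  have e1 : (31/50:ℝ)^n = (31/50:ℝ)^(n-1) * (31/50) := by
    rw [← pow_succ]; congr 1; omega
  have e2 : (1/2:ℝ)^(n+1) = (1/2:ℝ)^n * (1/2) := by rw [← pow_succ]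
  have e3 : (n+1) - 1 = n := by omega
  unfold hh
  rw [e3, e2, e1]
  have hQ : 0 ≤ ((n:ℝ)^2/600 + (n:ℝ)*(31/600) + 11/60) := by nlinarith
  have hc : (0:ℝ) ≤ (31/50:ℝ)^(n-1) := by positivity
  have hQ2 : ((n:ℝ)^2/3 + 4*(n:ℝ) + 10) - (31/50)*((((n:ℝ)+1))^2/3 + 4*((n:ℝ)+1) + 10)
      - (3/2)*((n:ℝ)+1)*(31/50) - (1/8)*(n:ℝ)*((n:ℝ)+1) ≥ 0 := by nlinarith
  have key := mul_nonneg hc hQ2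
  push_cast
  nlinarith [pow_nonneg (by norm_num : (0:ℝ) ≤ 1/2) n, key]

set_option maxHeartbeats 2000000 in
theorem lip_main (p q : ℝ) (hq : 1/2 ≤ q) (hqp : q < p) (hp : p < (Real.sqrt 5 - 1)/2) :
    ∀ n, 2 ≤ n → |s p n - s q n| ≤ (p - q) * (2 + hh 2 - hh n) := by
  have hp1 : 1/2 ≤ p := by linarith
  have hq2 : q < (Real.sqrt 5 - 1)/2 := by linarith
  have hpc : p ≤ 31/50 := phi_lt p hp1 hp
  have hqc : q ≤ 31/50 := by linarith
  have hq0 : (0:ℝ) < q := by linarith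
  have hp0 : (0:ℝ) < p := by linarith
  have hE : (0:ℝ) < p - q := by linarith
  intro n hn
  induction n, hn using Nat.le_induction with
  | base =>
    rw [s_two p, s_two q]
    have h3 : p^3 - q^3 ≤ 3*p^2*(p-q) := by
      have := pow_diff_le p q hq0.le hqp.le 2
      norm_num at this; linarith
    have h3' : 0 ≤ p^3 - q^3 := by
      have : q^3 ≤ p^3 := pow_le_pow_left₀ hq0.le hqp.le 3
      linarith
    have habs : |(2*p - p^3 - 1) - (2*q - q^3 - 1)| ≤ 2*(p-q) := by
      have hp2 : p^2 ≤ 1 := by nlinarith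
      have h4 : p^3 - q^3 ≤ 3*(p-q) := by
        nlinarith [mul_nonneg (by nlinarith : (0:ℝ) ≤ 1 - p^2) hE.le]
      rw [abs_le]
      constructor
      · linarith
      · linarith
    have : (p - q) * (2 + hh 2 - hh 2) = 2*(p-q) := by ring
    rw [this]
    exact habs
  | succ n hn ih =>
    have hN : (2:ℝ) ≤ (n:ℝ) := by exact_mod_cast hn
    have recP := s_rec p n (by omega) (s_mono p hp1 hp n hn)
    have recQ := s_rec q n (by omega) (s_mono q hq hq2 n hn)
    set a := s p n with ha_def
    set b := s q n with hb_def
    have hblb : -(1/8) ≤ b := s_lb q hq hq2 n hn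
    have hbub : b ≤ 1/2 := s_ub q hq hq2 n hn
    -- split
    have hsplit : s p (n+1) - s q (n+1) =
        ((1 - p^(n+1))*(a-b) + ((n:ℝ)+1)*p^n*(1-p)*(max (-a) 0 - max (-b) 0))
        + ((p^(n+1)*(1-p-b) - q^(n+1)*(1-q-b)) + ((1-q)^(n+1) - (1-p)^(n+1))
           + ((n:ℝ)+1)*(p^n*(1-p) - q^n*(1-q))*(max (-b) 0)) := by
      rw [recP, recQ]; ring
    -- T1 bound
    have hT1 : |(1 - p^(n+1))*(a-b) + ((n:ℝ)+1)*p^n*(1-p)*(max (-a) 0 - max (-b) 0)|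
        ≤ |a - b| := by
      apply F_lip
      · positivity
      · have : (0:ℝ) ≤ 1 - p := by linarith
        positivity
      · have hlx := LX1 p hp0.le n
        have e : p^(n+1) + ((n:ℝ)+1)*p^n*(1-p) = p^n*((n:ℝ)+1-(n:ℝ)*p) := by ring
        linarith
    -- T2 pieces
    have hd1 : p^(n+1) - q^(n+1) ≤ ((n:ℝ)+1)*p^n*(p-q) := pow_diff_le p q hq0.le hqp.le n
    have hd1' : 0 ≤ p^(n+1) - q^(n+1) := by
      have : q^(n+1) ≤ p^(n+1) := pow_le_pow_left₀ hq0.le hqp.le (n+1)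
      linarith
    have hd2 : p^n - q^n ≤ (n:ℝ)*p^(n-1)*(p-q) := by
      obtain ⟨m, rfl⟩ : ∃ m, n = m + 1 := ⟨n-1, by omega⟩
      have := pow_diff_le p q hq0.le hqp.le m
      have e : (m+1) - 1 = m := by omega
      rw [e]
      push_cast
      linarith
    have hd2' : 0 ≤ p^n - q^n := by
      have : q^n ≤ p^n := pow_le_pow_left₀ hq0.le hqp.le n
      linarith
    have hd1'' : p^(n+1) - q^(n+1) ≤ (n:ℝ)*p^(n-1)*(p-q) := by
      have hstep : ((n:ℝ)+1)*p^n ≤ (n:ℝ)*p^(n-1) := by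
        obtain ⟨m, rfl⟩ : ∃ m, n = m + 1 := ⟨n-1, by omega⟩
        have e : (m+1) - 1 = m := by omega
        rw [e, pow_succ]
        have hpm : (0:ℝ) ≤ p^m := pow_nonneg hp0.le m
        have hNm : (1:ℝ) ≤ (m:ℝ) := by
          have : 1 ≤ m := by omega
          exact_mod_cast this
        push_cast
        have hco : p*((m:ℝ)+1+1) ≤ (m:ℝ)+1 := by nlinarith
        calc ((m:ℝ)+1+1)*(p^m*p) = p^m * (p*((m:ℝ)+1+1)) := by ring
          _ ≤ p^m * ((m:ℝ)+1) := mul_le_mul_of_nonneg_left hco hpm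
          _ = ((m:ℝ)+1)*p^m := by ring
      nlinarith [hd1, hE]
    have hd3 : (1-q)^(n+1) - (1-p)^(n+1) ≤ ((n:ℝ)+1)*(1/2:ℝ)^n*(p-q) := by
      have h0 : (0:ℝ) ≤ 1 - p := by linarith
      have := pow_diff_le (1-q) (1-p) h0 (by linarith) n
      have h2 : (1-q)^n ≤ (1/2:ℝ)^n := pow_le_pow_left₀ (by linarith) (by linarith) n
      have h3 : ((n:ℝ)+1)*(1-q)^n*((1-q)-(1-p)) ≤ ((n:ℝ)+1)*(1/2:ℝ)^n*(p-q) := by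
        have e : (1-q)-(1-p) = p - q := by ring
        rw [e]
        apply mul_le_mul_of_nonneg_right _ hE.le
        apply mul_le_mul_of_nonneg_left h2 (by positivity)
      calc (1-q)^(n+1) - (1-p)^(n+1) ≤ ((n:ℝ)+1)*(1-q)^n*((1-q)-(1-p)) := this
        _ ≤ ((n:ℝ)+1)*(1/2:ℝ)^n*(p-q) := h3
    have hd3' : 0 ≤ (1-q)^(n+1) - (1-p)^(n+1) := by
      have : (1-p)^(n+1) ≤ (1-q)^(n+1) := pow_le_pow_left₀ (by linarith) (by linarith) (n+1)
      linarith
    -- X1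
    have hbb : |1 - q - b| ≤ 5/8 := by
      rw [abs_le]; constructor <;> nlinarith
    have hX1 : |p^(n+1)*(1-p-b) - q^(n+1)*(1-q-b)|
        ≤ ((n:ℝ)+1)*p^n*(p-q)*(5/8) + p^(n+1)*(p-q) := by
      have hid : p^(n+1)*(1-p-b) - q^(n+1)*(1-q-b)
          = (p^(n+1)-q^(n+1))*(1-q-b) + p^(n+1)*(q-p) := by ring
      rw [hid]
      calc |(p^(n+1)-q^(n+1))*(1-q-b) + p^(n+1)*(q-p)|
          ≤ |(p^(n+1)-q^(n+1))*(1-q-b)| + |p^(n+1)*(q-p)| := abs_add_le _ _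
        _ ≤ ((n:ℝ)+1)*p^n*(p-q)*(5/8) + p^(n+1)*(p-q) := by
            have e1 : |(p^(n+1)-q^(n+1))*(1-q-b)| = (p^(n+1)-q^(n+1))*|1-q-b| := by
              rw [abs_mul, abs_of_nonneg hd1']
            have e2 : |p^(n+1)*(q-p)| = p^(n+1)*(p-q) := by
              rw [abs_mul, abs_of_nonneg (pow_nonneg hp0.le _), abs_of_nonpos (by linarith)]
              ring
            rw [e1, e2]
            have : (p^(n+1)-q^(n+1))*|1-q-b| ≤ (((n:ℝ)+1)*p^n*(p-q))*(5/8) := by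
              apply mul_le_mul hd1 hbb (abs_nonneg _) (by positivity)
            linarith
    -- X3
    have hmaxb : max (-b) 0 ≤ 1/8 := by
      apply max_le (by linarith) (by norm_num)
    have hmaxb0 : 0 ≤ max (-b) 0 := le_max_right _ _
    have hdm : |p^n*(1-p) - q^n*(1-q)| ≤ (n:ℝ)*p^(n-1)*(p-q) := by
      have hid : p^n*(1-p) - q^n*(1-q) = (p^n - q^n) - (p^(n+1) - q^(n+1)) := by ring
      rw [hid, abs_le]
      constructor <;> linarith
    have hX3 : |((n:ℝ)+1)*(p^n*(1-p) - q^n*(1-q))*(max (-b) 0)|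
        ≤ ((n:ℝ)+1)*((n:ℝ)*p^(n-1)*(p-q))*(1/8) := by
      rw [abs_mul, abs_mul]
      rw [abs_of_nonneg (by positivity : (0:ℝ) ≤ (n:ℝ)+1), abs_of_nonneg hmaxb0]
      apply mul_le_mul
      · apply mul_le_mul_of_nonneg_left hdm (by positivity)
      · exact hmaxb
      · exact hmaxb0
      · positivity
    -- combine T2
    have hT2 : |(p^(n+1)*(1-p-b) - q^(n+1)*(1-q-b)) + ((1-q)^(n+1) - (1-p)^(n+1))
           + ((n:ℝ)+1)*(p^n*(1-p) - q^n*(1-q))*(max (-b) 0)|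
        ≤ (p-q) * ((3/2)*((n:ℝ)+1)*(31/50:ℝ)^n + ((n:ℝ)+1)*(1/2:ℝ)^n
            + (1/8)*(n:ℝ)*((n:ℝ)+1)*(31/50:ℝ)^(n-1)) := by
      have habs2 : |(1-q)^(n+1) - (1-p)^(n+1)| ≤ ((n:ℝ)+1)*(1/2:ℝ)^n*(p-q) := by
        rw [abs_of_nonneg hd3']; exact hd3
      have tri : |(p^(n+1)*(1-p-b) - q^(n+1)*(1-q-b)) + ((1-q)^(n+1) - (1-p)^(n+1))
           + ((n:ℝ)+1)*(p^n*(1-p) - q^n*(1-q))*(max (-b) 0)|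
          ≤ |p^(n+1)*(1-p-b) - q^(n+1)*(1-q-b)| + |(1-q)^(n+1) - (1-p)^(n+1)|
            + |((n:ℝ)+1)*(p^n*(1-p) - q^n*(1-q))*(max (-b) 0)| := by
        calc _ ≤ |(p^(n+1)*(1-p-b) - q^(n+1)*(1-q-b)) + ((1-q)^(n+1) - (1-p)^(n+1))|
              + |((n:ℝ)+1)*(p^n*(1-p) - q^n*(1-q))*(max (-b) 0)| := abs_add_le _ _
          _ ≤ _ := by linarith [abs_add_le (p^(n+1)*(1-p-b) - q^(n+1)*(1-q-b)) ((1-q)^(n+1) - (1-p)^(n+1))]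
      -- convert p powers to c powers
      have hcn : p^n ≤ (31/50:ℝ)^n := pow_le_pow_left₀ hp0.le hpc n
      have hcn1 : p^(n-1) ≤ (31/50:ℝ)^(n-1) := pow_le_pow_left₀ hp0.le hpc (n-1)
      have hcn' : p^(n+1) ≤ (31/50:ℝ)^n := by
        calc p^(n+1) = p^n * p := by rw [pow_succ]
          _ ≤ p^n * 1 := by
              apply mul_le_mul_of_nonneg_left (by linarith) (pow_nonneg hp0.le n)
          _ = p^n := by ring
          _ ≤ (31/50:ℝ)^n := hcn
      have hpn0 : (0:ℝ) ≤ p^n := pow_nonneg hp0.le n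
      have hpn10 : (0:ℝ) ≤ p^(n-1) := pow_nonneg hp0.le (n-1)
      have hfin : ((n:ℝ)+1)*p^n*(p-q)*(5/8) + p^(n+1)*(p-q) + ((n:ℝ)+1)*(1/2:ℝ)^n*(p-q)
            + ((n:ℝ)+1)*((n:ℝ)*p^(n-1)*(p-q))*(1/8)
          ≤ (p-q) * ((3/2)*((n:ℝ)+1)*(31/50:ℝ)^n + ((n:ℝ)+1)*(1/2:ℝ)^n
            + (1/8)*(n:ℝ)*((n:ℝ)+1)*(31/50:ℝ)^(n-1)) := by
        nlinarith [mul_le_mul_of_nonneg_left hcn (by positivity : (0:ℝ) ≤ (5/8)*((n:ℝ)+1)*(p-q)),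
          mul_le_mul_of_nonneg_left hcn' (by positivity : (0:ℝ) ≤ (p-q)),
          mul_le_mul_of_nonneg_left hcn1 (by positivity : (0:ℝ) ≤ (1/8)*(n:ℝ)*((n:ℝ)+1)*(p-q)),
          mul_nonneg (mul_nonneg (by positivity : (0:ℝ) ≤ ((n:ℝ)+1)) (pow_nonneg (by norm_num : (0:ℝ) ≤ (31/50:ℝ)) n)) hE.le]
      linarith [tri, hX1, habs2, hX3]
    -- final assembly
    have htri : |s p (n+1) - s q (n+1)| ≤ |a - b| + (p-q) * ((3/2)*((n:ℝ)+1)*(31/50:ℝ)^n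
        + ((n:ℝ)+1)*(1/2:ℝ)^n + (1/8)*(n:ℝ)*((n:ℝ)+1)*(31/50:ℝ)^(n-1)) := by
      rw [hsplit]
      calc _ ≤ |(1 - p^(n+1))*(a-b) + ((n:ℝ)+1)*p^n*(1-p)*(max (-a) 0 - max (-b) 0)|
            + |(p^(n+1)*(1-p-b) - q^(n+1)*(1-q-b)) + ((1-q)^(n+1) - (1-p)^(n+1))
              + ((n:ℝ)+1)*(p^n*(1-p) - q^n*(1-q))*(max (-b) 0)| := abs_add_le _ _
        _ ≤ _ := by linarith [hT1, hT2]
    have hpot := pot_step n hn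
    calc |s p (n+1) - s q (n+1)| ≤ _ := htri
      _ ≤ (p - q) * (2 + hh 2 - hh n) + (p-q)*(hh n - hh (n+1)) := by
          have := mul_le_mul_of_nonneg_left hpot hE.le
          linarith [ih]
      _ = (p - q) * (2 + hh 2 - hh (n+1)) := by ring

theorem coin_game_s_upper_lipschitz (p q : ℝ) (hq : 1 / 2 ≤ q) (hqp : q < p)
    (hp : p < (Real.sqrt 5 - 1) / 2) (n : ℕ) (hn : 1 ≤ n) :
    s p n < s q n + 17 * (p - q) := by
  have hE : (0:ℝ) < p - q := by linarith
  rcases Nat.lt_or_ge n 2 with h2 | h2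
  · have : n = 1 := by omega
    rw [this, s_one, s_one]
    linarith
  · have hlip := lip_main p q hq hqp hp n h2
    have hh2 : hh 2 = 899/75 + 2 := by unfold hh; norm_num
    have hhn : 0 ≤ hh n := hh_nonneg n
    have h1 : s p n - s q n ≤ |s p n - s q n| := le_abs_self _
    have h3 : (p - q) * (2 + hh 2 - hh n) ≤ (p - q) * (2 + hh 2) := by
      apply mul_le_mul_of_nonneg_left (by linarith) hE.le
    have h4 : (p - q) * (2 + hh 2) < 17 * (p - q) := by
      rw [hh2]; nlinarith
    linarith
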